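/- arXiv:0906.2410 — 2 statements merged into one kernel-verified Lean document; each statement's English description precedes it below -/
import Mathlib

section
/- Let λ be a smooth function on a pseudo-Riemannian manifold satisfying ∇ₖ∇ⱼ∇ᵢλ + 2∇ₖλ·g_{ij} + ∇ᵢλ·g_{jk} + ∇ⱼλ·g_{ik} = 0, and let γ be a geodesic with g(γ̇,γ̇) = 0. Then the function t ↦ λ(γ(t)) satisfies d³/dt³ λ(γ(t)) = 0, hence is a polynomial of degree at most 2 in t. -/
open scoped BigOperators

/-- Partial derivative of a function on the coordinate chart `ℝⁿ` in the `i`-th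
coordinate direction. -/
noncomputable def pd {n : ℕ} (f : (Fin n → ℝ) → ℝ) (i : Fin n) (x : Fin n → ℝ) : ℝ :=
  fderiv ℝ f x (Pi.single i 1)

/-- Second covariant derivative `∇ⱼ∇ᵢ f` of a function, with respect to the
connection with Christoffel symbols `Γ` (`Γ x m j i` = `Γ^m_{ji}(x)`). -/
noncomputable def nab2 {n : ℕ} (Γ : (Fin n → ℝ) → Fin n → Fin n → Fin n → ℝ)
    (f : (Fin n → ℝ) → ℝ) (j i : Fin n) (x : Fin n → ℝ) : ℝ :=
  pd (pd f i) j x - ∑ m, Γ x m j i * pd f m x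

/-- Third covariant derivative `∇ₖ∇ⱼ∇ᵢ f` of a function. -/
noncomputable def nab3 {n : ℕ} (Γ : (Fin n → ℝ) → Fin n → Fin n → Fin n → ℝ)
    (f : (Fin n → ℝ) → ℝ) (k j i : Fin n) (x : Fin n → ℝ) : ℝ :=
  pd (nab2 Γ f j i) k x - ∑ m, Γ x m k j * nab2 Γ f m i x
    - ∑ m, Γ x m k i * nab2 Γ f j m x

/-- The Christoffel symbols `Γ^i_{jk} = ½ Σ_h g^{ih}(∂ₖ g_{jh} + ∂ⱼ g_{hk} − ∂_h g_{jk})`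
of a metric `G` with inverse `Ginv`. -/
noncomputable def christoffel {m : ℕ} (G Ginv : (Fin m → ℝ) → Fin m → Fin m → ℝ)
    (x : Fin m → ℝ) (i j k : Fin m) : ℝ :=
  (1 / 2) * ∑ h, Ginv x i h *
    (pd (fun y => G y j h) k x + pd (fun y => G y h k) j x - pd (fun y => G y j k) h x)

section helpers

lemma pd_contDiff {n : ℕ} {F : (Fin n → ℝ) → ℝ} (hF : ContDiff ℝ (⊤ : ℕ∞) F) (i : Fin n) :
    ContDiff ℝ (⊤ : ℕ∞) (pd F i) :=
  (hF.fderiv_right (by simp)).clm_apply contDiff_const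

lemma fderiv_apply_eq_sum {n : ℕ} {F : (Fin n → ℝ) → ℝ}
    (x v : Fin n → ℝ) : fderiv ℝ F x v = ∑ i, v i * pd F i x := by
  have hv : v = ∑ i, v i • (Pi.single i 1 : Fin n → ℝ) := by
    funext j
    simp [Finset.sum_apply, Pi.single_apply, eq_comm]
  conv_lhs => rw [hv]
  rw [map_sum]
  simp [pd, smul_eq_mul]

lemma chain {n : ℕ} {F : (Fin n → ℝ) → ℝ} {γ : ℝ → Fin n → ℝ}
    (hF : ContDiff ℝ (⊤ : ℕ∞) F) (hγ : ContDiff ℝ (⊤ : ℕ∞) γ) (t : ℝ) :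
    HasDerivAt (fun s => F (γ s)) (∑ i, pd F i (γ t) * deriv (fun s => γ s i) t) t := by
  have hd : HasDerivAt γ (deriv γ t) t := (hγ.differentiable (by simp) t).hasDerivAt
  have h := (hF.differentiable (by simp) (γ t)).hasFDerivAt.comp_hasDerivAt t hd
  have hv : ∀ i, deriv (fun s => γ s i) t = deriv γ t i := fun i =>
    ((hasDerivAt_pi.mp hd) i).deriv
  convert h using 1 <;> try rfl
  rw [fderiv_apply_eq_sum]
  exact Finset.sum_congr rfl fun i _ => by rw [hv, mul_comm]

lemma nab2_contDiff {n : ℕ} {Γ : (Fin n → ℝ) → Fin n → Fin n → Fin n → ℝ}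
    {lam : (Fin n → ℝ) → ℝ} (hΓ : ContDiff ℝ (⊤ : ℕ∞) Γ) (hlam : ContDiff ℝ (⊤ : ℕ∞) lam)
    (j i : Fin n) : ContDiff ℝ (⊤ : ℕ∞) (nab2 Γ lam j i) := by
  have : nab2 Γ lam j i = fun x => pd (pd lam i) j x - ∑ m, Γ x m j i * pd lam m x := rfl
  rw [this]
  exact (pd_contDiff (pd_contDiff hlam i) j).sub
    (ContDiff.sum fun m _ =>
      ((contDiff_pi.mp ((contDiff_pi.mp ((contDiff_pi.mp hΓ) m)) j)) i).mul
        (pd_contDiff hlam m))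

variable {α M : Type*} [Fintype α] [AddCommMonoid M]

-- 3-index permutations
lemma p_bca (f : α → α → α → M) :
    ∑ a, ∑ b, ∑ c, f a b c = ∑ b, ∑ c, ∑ a, f a b c := by
  calc ∑ a, ∑ b, ∑ c, f a b c = ∑ b, ∑ a, ∑ c, f a b c := Finset.sum_comm
    _ = ∑ b, ∑ c, ∑ a, f a b c := Finset.sum_congr rfl fun _ _ => Finset.sum_comm

lemma p_cab (f : α → α → α → M) :
    ∑ a, ∑ b, ∑ c, f a b c = ∑ c, ∑ a, ∑ b, f a b c := by
  calc ∑ a, ∑ b, ∑ c, f a b c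
      = ∑ a, ∑ c, ∑ b, f a b c := Finset.sum_congr rfl fun _ _ => Finset.sum_comm
    _ = ∑ c, ∑ a, ∑ b, f a b c := Finset.sum_comm

-- 4-index permutations
lemma q2 (f : α → α → α → α → M) :
    ∑ j, ∑ i, ∑ a, ∑ b, f j i a b = ∑ a, ∑ b, ∑ i, ∑ j, f j i a b := by
  calc ∑ j, ∑ i, ∑ a, ∑ b, f j i a b
      = ∑ j, ∑ a, ∑ i, ∑ b, f j i a b := Finset.sum_congr rfl fun _ _ => Finset.sum_comm
    _ = ∑ a, ∑ j, ∑ i, ∑ b, f j i a b := Finset.sum_comm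
    _ = ∑ a, ∑ j, ∑ b, ∑ i, f j i a b :=
        Finset.sum_congr rfl fun _ _ => Finset.sum_congr rfl fun _ _ => Finset.sum_comm
    _ = ∑ a, ∑ b, ∑ j, ∑ i, f j i a b := Finset.sum_congr rfl fun _ _ => Finset.sum_comm
    _ = ∑ a, ∑ b, ∑ i, ∑ j, f j i a b :=
        Finset.sum_congr rfl fun _ _ => Finset.sum_congr rfl fun _ _ => Finset.sum_comm

lemma q3 (f : α → α → α → α → M) :
    ∑ j, ∑ i, ∑ a, ∑ b, f j i a b = ∑ a, ∑ j, ∑ b, ∑ i, f j i a b := by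
  calc ∑ j, ∑ i, ∑ a, ∑ b, f j i a b
      = ∑ j, ∑ a, ∑ i, ∑ b, f j i a b := Finset.sum_congr rfl fun _ _ => Finset.sum_comm
    _ = ∑ a, ∑ j, ∑ i, ∑ b, f j i a b := Finset.sum_comm
    _ = ∑ a, ∑ j, ∑ b, ∑ i, f j i a b :=
        Finset.sum_congr rfl fun _ _ => Finset.sum_congr rfl fun _ _ => Finset.sum_comm

end helpers

section algebra
variable {n : ℕ}

lemma alg2 (B : Fin n → Fin n → ℝ) (q v : Fin n → ℝ) (C : Fin n → Fin n → Fin n → ℝ) :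
    ∑ j, ∑ i, (B i j - ∑ m, C m j i * q m) * v j * v i
    = ∑ i, ((∑ j, B i j * v j) * v i + q i * -(∑ j, ∑ k, C i j k * v j * v k)) := by
  have e1 : ∑ i, (∑ j, B i j * v j) * v i = ∑ j, ∑ i, B i j * v j * v i := by
    rw [Finset.sum_comm]
    exact Finset.sum_congr rfl fun i _ => Finset.sum_mul _ _ _
  have e2 : ∑ i, q i * -(∑ j, ∑ k, C i j k * v j * v k)
      = -∑ j, ∑ i, (∑ m, C m j i * q m) * v j * v i := by
    calc ∑ i, q i * -(∑ j, ∑ k, C i j k * v j * v k)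
        = -∑ i, ∑ j, ∑ k, q i * (C i j k * v j * v k) := by
          rw [← Finset.sum_neg_distrib]
          refine Finset.sum_congr rfl fun i _ => ?_
          rw [mul_neg, Finset.mul_sum]
          congr 1
          exact Finset.sum_congr rfl fun j _ => Finset.mul_sum _ _ _
      _ = -∑ j, ∑ k, ∑ i, q i * (C i j k * v j * v k) := by
          rw [p_bca (fun i j k => q i * (C i j k * v j * v k))]
      _ = -∑ j, ∑ i, (∑ m, C m j i * q m) * v j * v i := by
          congr 1
          refine Finset.sum_congr rfl fun j _ => Finset.sum_congr rfl fun k _ => ?_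
          rw [Finset.sum_mul, Finset.sum_mul]
          exact Finset.sum_congr rfl fun m _ => by ring
  calc ∑ j, ∑ i, (B i j - ∑ m, C m j i * q m) * v j * v i
      = (∑ j, ∑ i, B i j * v j * v i) - ∑ j, ∑ i, (∑ m, C m j i * q m) * v j * v i := by
        rw [← Finset.sum_sub_distrib]
        refine Finset.sum_congr rfl fun j _ => ?_
        rw [← Finset.sum_sub_distrib]
        exact Finset.sum_congr rfl fun i _ => by ring
    _ = ∑ i, ((∑ j, B i j * v j) * v i + q i * -(∑ j, ∑ k, C i j k * v j * v k)) := by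
        rw [Finset.sum_add_distrib, e1, e2, sub_eq_add_neg]

lemma sum2_neg (X : Fin n → Fin n → ℝ) :
    ∑ j, ∑ i, -(X j i) = -∑ j, ∑ i, X j i := by simp

lemma sum3_neg (X : Fin n → Fin n → Fin n → ℝ) :
    ∑ k, ∑ j, ∑ i, -(X k j i) = -∑ k, ∑ j, ∑ i, X k j i := by simp

lemma alg3 (B : Fin n → Fin n → Fin n → ℝ) (N : Fin n → Fin n → ℝ) (v : Fin n → ℝ)
    (C : Fin n → Fin n → Fin n → ℝ) :
    ∑ k, ∑ j, ∑ i,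
        (B j i k - ∑ m, C m k j * N m i - ∑ m, C m k i * N j m) * v k * v j * v i
    = ∑ j, ∑ i,
        (((∑ k, B j i k * v k) * v j + N j i * -(∑ a, ∑ b, C j a b * v a * v b)) * v i
          + N j i * v j * -(∑ a, ∑ b, C i a b * v a * v b)) := by
  -- E1
  have e1 : ∑ j, ∑ i, (∑ k, B j i k * v k) * v j * v i
      = ∑ k, ∑ j, ∑ i, B j i k * v k * v j * v i := by
    calc ∑ j, ∑ i, (∑ k, B j i k * v k) * v j * v i
        = ∑ j, ∑ i, ∑ k, B j i k * v k * v j * v i := by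
          refine Finset.sum_congr rfl fun j _ => Finset.sum_congr rfl fun i _ => ?_
          rw [Finset.sum_mul, Finset.sum_mul]
      _ = ∑ k, ∑ j, ∑ i, B j i k * v k * v j * v i :=
          p_cab (fun j i k => B j i k * v k * v j * v i)
  -- E2
  have e2 : ∑ j, ∑ i, N j i * -(∑ a, ∑ b, C j a b * v a * v b) * v i
      = -∑ k, ∑ j, ∑ i, (∑ m, C m k j * N m i) * v k * v j * v i := by
    calc ∑ j, ∑ i, N j i * -(∑ a, ∑ b, C j a b * v a * v b) * v i
        = ∑ j, ∑ i, -(∑ a, ∑ b, N j i * (C j a b * v a * v b) * v i) := by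
          refine Finset.sum_congr rfl fun j _ => Finset.sum_congr rfl fun i _ => ?_
          rw [mul_neg, neg_mul, neg_inj, Finset.mul_sum, Finset.sum_mul]
          refine Finset.sum_congr rfl fun a _ => ?_
          rw [Finset.mul_sum, Finset.sum_mul]
      _ = -∑ j, ∑ i, ∑ a, ∑ b, N j i * (C j a b * v a * v b) * v i :=
          sum2_neg _
      _ = -∑ a, ∑ b, ∑ i, ∑ j, N j i * (C j a b * v a * v b) * v i := by
          rw [q2 (fun j i a b => N j i * (C j a b * v a * v b) * v i)]
      _ = -∑ k, ∑ j, ∑ i, (∑ m, C m k j * N m i) * v k * v j * v i := by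
          congr 1
          refine Finset.sum_congr rfl fun a _ => Finset.sum_congr rfl fun b _ =>
            Finset.sum_congr rfl fun i _ => ?_
          rw [Finset.sum_mul, Finset.sum_mul, Finset.sum_mul]
          exact Finset.sum_congr rfl fun m _ => by ring
  -- E3
  have e3 : ∑ j, ∑ i, N j i * v j * -(∑ a, ∑ b, C i a b * v a * v b)
      = -∑ k, ∑ j, ∑ i, (∑ m, C m k i * N j m) * v k * v j * v i := by
    calc ∑ j, ∑ i, N j i * v j * -(∑ a, ∑ b, C i a b * v a * v b)
        = ∑ j, ∑ i, -(∑ a, ∑ b, N j i * v j * (C i a b * v a * v b)) := by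
          refine Finset.sum_congr rfl fun j _ => Finset.sum_congr rfl fun i _ => ?_
          rw [mul_neg, neg_inj, Finset.mul_sum]
          refine Finset.sum_congr rfl fun a _ => ?_
          rw [Finset.mul_sum]
      _ = -∑ j, ∑ i, ∑ a, ∑ b, N j i * v j * (C i a b * v a * v b) :=
          sum2_neg _
      _ = -∑ a, ∑ j, ∑ b, ∑ i, N j i * v j * (C i a b * v a * v b) := by
          rw [q3 (fun j i a b => N j i * v j * (C i a b * v a * v b))]
      _ = -∑ k, ∑ j, ∑ i, (∑ m, C m k i * N j m) * v k * v j * v i := by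
          congr 1
          refine Finset.sum_congr rfl fun a _ => Finset.sum_congr rfl fun j _ =>
            Finset.sum_congr rfl fun b _ => ?_
          rw [Finset.sum_mul, Finset.sum_mul, Finset.sum_mul]
          exact Finset.sum_congr rfl fun m _ => by ring
  calc ∑ k, ∑ j, ∑ i,
        (B j i k - ∑ m, C m k j * N m i - ∑ m, C m k i * N j m) * v k * v j * v i
      = (∑ k, ∑ j, ∑ i, B j i k * v k * v j * v i)
          - (∑ k, ∑ j, ∑ i, (∑ m, C m k j * N m i) * v k * v j * v i)
          - (∑ k, ∑ j, ∑ i, (∑ m, C m k i * N j m) * v k * v j * v i) := by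
        rw [← Finset.sum_sub_distrib, ← Finset.sum_sub_distrib]
        refine Finset.sum_congr rfl fun k _ => ?_
        rw [← Finset.sum_sub_distrib, ← Finset.sum_sub_distrib]
        refine Finset.sum_congr rfl fun j _ => ?_
        rw [← Finset.sum_sub_distrib, ← Finset.sum_sub_distrib]
        exact Finset.sum_congr rfl fun i _ => by ring
    _ = ∑ j, ∑ i,
        (((∑ k, B j i k * v k) * v j + N j i * -(∑ a, ∑ b, C j a b * v a * v b)) * v i
          + N j i * v j * -(∑ a, ∑ b, C i a b * v a * v b)) := by
        rw [← e1, sub_eq_add_neg, sub_eq_add_neg, ← e2, ← e3,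
          ← Finset.sum_add_distrib, ← Finset.sum_add_distrib]
        refine Finset.sum_congr rfl fun j _ => ?_
        rw [← Finset.sum_add_distrib, ← Finset.sum_add_distrib]
        exact Finset.sum_congr rfl fun i _ => by ring

lemma alg4 (p v : Fin n → ℝ) (G : Fin n → Fin n → ℝ)
    (hG : ∑ i, ∑ j, G i j * v i * v j = 0) :
    ∑ k, ∑ j, ∑ i, (-(2 * p k * G i j + p i * G j k + p j * G i k)) * v k * v j * v i
      = 0 := by
  have hG1 : ∑ j, ∑ i, G i j * v j * v i = 0 := by
    rw [Finset.sum_comm]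
    calc ∑ i, ∑ j, G i j * v j * v i = ∑ i, ∑ j, G i j * v i * v j :=
          Finset.sum_congr rfl fun i _ => Finset.sum_congr rfl fun j _ => by ring
      _ = 0 := hG
  have hG2 : ∑ k, ∑ j, G j k * v k * v j = 0 := by
    rw [Finset.sum_comm]
    calc ∑ j, ∑ k, G j k * v k * v j = ∑ j, ∑ k, G j k * v j * v k :=
          Finset.sum_congr rfl fun j _ => Finset.sum_congr rfl fun k _ => by ring
      _ = 0 := hG
  have hG3 : ∑ k, ∑ i, G i k * v k * v i = 0 := by
    rw [Finset.sum_comm]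
    calc ∑ i, ∑ k, G i k * v k * v i = ∑ i, ∑ k, G i k * v i * v k :=
          Finset.sum_congr rfl fun i _ => Finset.sum_congr rfl fun k _ => by ring
      _ = 0 := hG
  have t1 : ∑ k, ∑ j, ∑ i, p k * G i j * v k * v j * v i = 0 := by
    calc ∑ k, ∑ j, ∑ i, p k * G i j * v k * v j * v i
        = ∑ k, (p k * v k) * (∑ j, ∑ i, G i j * v j * v i) := by
          refine Finset.sum_congr rfl fun k _ => ?_
          rw [Finset.mul_sum]
          refine Finset.sum_congr rfl fun j _ => ?_
          rw [Finset.mul_sum]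
          exact Finset.sum_congr rfl fun i _ => by ring
      _ = 0 := by rw [hG1]; simp
  have t2 : ∑ k, ∑ j, ∑ i, p i * G j k * v k * v j * v i = 0 := by
    calc ∑ k, ∑ j, ∑ i, p i * G j k * v k * v j * v i
        = ∑ k, ∑ j, (G j k * v k * v j) * (∑ i, p i * v i) := by
          refine Finset.sum_congr rfl fun k _ => Finset.sum_congr rfl fun j _ => ?_
          rw [Finset.mul_sum]
          exact Finset.sum_congr rfl fun i _ => by ring
      _ = (∑ k, ∑ j, G j k * v k * v j) * (∑ i, p i * v i) := by
          rw [Finset.sum_mul]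
          exact Finset.sum_congr rfl fun k _ => (Finset.sum_mul _ _ _).symm
      _ = 0 := by rw [hG2, zero_mul]
  have t3 : ∑ k, ∑ j, ∑ i, p j * G i k * v k * v j * v i = 0 := by
    calc ∑ k, ∑ j, ∑ i, p j * G i k * v k * v j * v i
        = ∑ k, ∑ j, (p j * v j) * (∑ i, G i k * v k * v i) := by
          refine Finset.sum_congr rfl fun k _ => Finset.sum_congr rfl fun j _ => ?_
          rw [Finset.mul_sum]
          exact Finset.sum_congr rfl fun i _ => by ring
      _ = ∑ k, (∑ j, p j * v j) * (∑ i, G i k * v k * v i) := by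
          exact Finset.sum_congr rfl fun k _ => (Finset.sum_mul _ _ _).symm
      _ = (∑ j, p j * v j) * (∑ k, ∑ i, G i k * v k * v i) := by
          rw [Finset.mul_sum]
      _ = 0 := by rw [hG3, mul_zero]
  calc ∑ k, ∑ j, ∑ i, (-(2 * p k * G i j + p i * G j k + p j * G i k)) * v k * v j * v i
      = ∑ k, ∑ j, ∑ i, -((2 * (p k * G i j * v k * v j * v i)
          + p i * G j k * v k * v j * v i
          + p j * G i k * v k * v j * v i)) := by
        refine Finset.sum_congr rfl fun k _ => Finset.sum_congr rfl fun j _ =>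
          Finset.sum_congr rfl fun i _ => by ring
      _ = -(∑ k, ∑ j, ∑ i, (2 * (p k * G i j * v k * v j * v i)
          + p i * G j k * v k * v j * v i
          + p j * G i k * v k * v j * v i)) := sum3_neg _
      _ = 0 := by
        rw [neg_eq_zero]
        simp only [Finset.sum_add_distrib, ← Finset.mul_sum]
        rw [t1, t2, t3]; ring
end algebra

/-- Along a lightlike geodesic `γ` of a pseudo-Riemannian metric `g`, any solution
`λ` of the Tanno–Obata equation
`∇ₖ∇ⱼ∇ᵢλ + 2∇ₖλ g_{ij} + ∇ᵢλ g_{jk} + ∇ⱼλ g_{ik} = 0`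
satisfies `d³/dt³ λ(γ(t)) = 0`, hence `λ∘γ` is a polynomial of degree ≤ 2. -/
theorem stmt_2 (n : ℕ)
    (g : (Fin n → ℝ) → Fin n → Fin n → ℝ)
    (Γ : (Fin n → ℝ) → Fin n → Fin n → Fin n → ℝ)
    (lam : (Fin n → ℝ) → ℝ) (γ : ℝ → Fin n → ℝ)
    (hg : ContDiff ℝ (⊤ : ℕ∞) g) (hΓ : ContDiff ℝ (⊤ : ℕ∞) Γ)
    (hlam : ContDiff ℝ (⊤ : ℕ∞) lam) (hγ : ContDiff ℝ (⊤ : ℕ∞) γ)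
    -- the Tanno–Obata equation
    (htanno : ∀ (x : Fin n → ℝ) (k j i : Fin n),
      nab3 Γ lam k j i x + 2 * pd lam k x * g x i j
        + pd lam i x * g x j k + pd lam j x * g x i k = 0)
    -- γ is a geodesic of the Levi-Civita connection Γ of g
    (hgeo : ∀ (t : ℝ) (i : Fin n),
      deriv (deriv fun s => γ s i) t
        + ∑ j, ∑ k, Γ (γ t) i j k * deriv (fun s => γ s j) t * deriv (fun s => γ s k) t = 0)
    -- γ is lightlike
    (hnull : ∀ t : ℝ,
      ∑ i, ∑ j, g (γ t) i j * deriv (fun s => γ s i) t * deriv (fun s => γ s j) t = 0) :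
    (∀ t : ℝ, iteratedDeriv 3 (fun s => lam (γ s)) t = 0) ∧
      ∃ c₂ c₁ c₀ : ℝ, ∀ t : ℝ, lam (γ t) = c₂ * t ^ 2 + c₁ * t + c₀ := by
  -- velocity
  set V : ℝ → Fin n → ℝ := fun t i => deriv (fun s => γ s i) t with hVdef
  have hγi : ∀ i, ContDiff ℝ (⊤ : ℕ∞) (fun s => γ s i) := fun i => contDiff_pi.mp hγ i
  have hVi : ∀ i, ContDiff ℝ ((⊤:ℕ∞):WithTop ℕ∞) (fun s => V s i) := fun i => by
    have h := (contDiff_infty_iff_deriv.mp ((hγi i).of_le (by simp))).2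
    exact h
  have hVd : ∀ i t, HasDerivAt (fun s => V s i) (deriv (fun s => V s i) t) t :=
    fun i t => ((hVi i).differentiable (by simp) t).hasDerivAt
  have hA : ∀ t i, deriv (fun s => V s i) t
      = -(∑ j, ∑ k, Γ (γ t) i j k * V t j * V t k) := by
    intro t i
    have h := hgeo t i
    have he : (fun s => V s i) = deriv (fun s => γ s i) := rfl
    rw [he]
    linarith [h]
  -- the three derivative functions
  set f : ℝ → ℝ := fun s => lam (γ s) with hfdef
  set F1 : ℝ → ℝ := fun t => ∑ i, pd lam i (γ t) * V t i with hF1def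
  set F2 : ℝ → ℝ := fun t => ∑ j, ∑ i, nab2 Γ lam j i (γ t) * V t j * V t i with hF2def
  set F3 : ℝ → ℝ :=
    fun t => ∑ k, ∑ j, ∑ i, nab3 Γ lam k j i (γ t) * V t k * V t j * V t i with hF3def
  have h1 : ∀ t, HasDerivAt f (F1 t) t := fun t => chain hlam hγ t
  have h2 : ∀ t, HasDerivAt F1 (F2 t) t := by
    intro t
    have hterm : ∀ i ∈ Finset.univ, HasDerivAt (fun s => pd lam i (γ s) * V s i)
        ((∑ j, pd (pd lam i) j (γ t) * V t j) * V t i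
          + pd lam i (γ t) * deriv (fun s => V s i) t) t :=
      fun i _ => (chain (pd_contDiff hlam i) hγ t).mul (hVd i t)
    have hsum := HasDerivAt.fun_sum hterm
    convert hsum using 1 <;> try rfl
    simp only [hA t, hF2def, nab2]
    exact alg2 (fun i j => pd (pd lam i) j (γ t)) (fun i => pd lam i (γ t)) (V t) (Γ (γ t))
  have h3 : ∀ t, HasDerivAt F2 (F3 t) t := by
    intro t
    have hterm : ∀ j ∈ Finset.univ, HasDerivAt
        (fun s => ∑ i, nab2 Γ lam j i (γ s) * V s j * V s i)
        (∑ i, (((∑ k, pd (nab2 Γ lam j i) k (γ t) * V t k) * V t j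
            + nab2 Γ lam j i (γ t) * deriv (fun s => V s j) t) * V t i
          + nab2 Γ lam j i (γ t) * V t j * deriv (fun s => V s i) t)) t := by
      intro j _
      refine HasDerivAt.fun_sum fun i _ => ?_
      exact ((chain (nab2_contDiff hΓ hlam j i) hγ t).mul (hVd j t)).mul (hVd i t)
    have hsum := HasDerivAt.fun_sum hterm
    convert hsum using 1 <;> try rfl
    simp only [hA t, hF3def, nab3]
    exact alg3 (fun j i k => pd (nab2 Γ lam j i) k (γ t)) (fun j i => nab2 Γ lam j i (γ t))
      (V t) (Γ (γ t))
  have hF3 : ∀ t, F3 t = 0 := by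
    intro t
    have hn : ∑ i, ∑ j, g (γ t) i j * V t i * V t j = 0 := hnull t
    have htan : ∀ k j i, nab3 Γ lam k j i (γ t)
        = -(2 * pd lam k (γ t) * g (γ t) i j + pd lam i (γ t) * g (γ t) j k
            + pd lam j (γ t) * g (γ t) i k) := by
      intro k j i
      have := htanno (γ t) k j i
      linarith
    calc F3 t = ∑ k, ∑ j, ∑ i,
          (-(2 * pd lam k (γ t) * g (γ t) i j + pd lam i (γ t) * g (γ t) j k
            + pd lam j (γ t) * g (γ t) i k)) * V t k * V t j * V t i := by
          refine Finset.sum_congr rfl fun k _ => Finset.sum_congr rfl fun j _ =>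
            Finset.sum_congr rfl fun i _ => ?_
          rw [htan]
      _ = 0 := alg4 (fun m => pd lam m (γ t)) (V t) (g (γ t)) hn
  -- conclusions
  have e1 : deriv f = F1 := funext fun t => (h1 t).deriv
  have e2 : deriv F1 = F2 := funext fun t => (h2 t).deriv
  have e3 : deriv F2 = F3 := funext fun t => (h3 t).deriv
  constructor
  · intro t
    have : iteratedDeriv 3 f = deriv (deriv (deriv f)) := by
      simp [iteratedDeriv_succ, iteratedDeriv_zero]
    rw [this, e1, e2, e3]
    exact hF3 t
  · -- polynomial
    have hF2const : ∀ t, F2 t = F2 0 := by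
      intro t
      exact is_const_of_deriv_eq_zero (fun s => (h3 s).differentiableAt)
        (fun s => by rw [(h3 s).deriv, hF3 s]) t 0
    have hF1lin : ∀ t, F1 t = F2 0 * t + F1 0 := by
      intro t
      have hg1 : ∀ s, HasDerivAt (fun u => F1 u - (F2 0 * u + F1 0)) 0 s := by
        intro s
        have := (h2 s).fun_sub (((hasDerivAt_id s).const_mul (F2 0)).add_const (F1 0))
        simpa [hF2const s] using this
      have := is_const_of_deriv_eq_zero (fun s => (hg1 s).differentiableAt)
        (fun s => (hg1 s).deriv) t 0
      simp at this
      linarith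
    refine ⟨F2 0 / 2, F1 0, f 0, fun t => ?_⟩
    have hg0 : ∀ s, HasDerivAt (fun u => f u - (F2 0 / 2 * u ^ 2 + F1 0 * u + f 0)) 0 s := by
      intro s
      have hp : HasDerivAt (fun u : ℝ => F2 0 / 2 * u ^ 2 + F1 0 * u + f 0)
          (F2 0 * s + F1 0) s := by
        have h₁ : HasDerivAt (fun u : ℝ => u ^ 2) (2 * s) s := by
          simpa using (hasDerivAt_pow 2 s)
        have := ((h₁.const_mul (F2 0 / 2)).add ((hasDerivAt_id s).const_mul (F1 0))).add_const (f 0)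
        convert this using 1 <;> try rfl
        ring
      have := (h1 s).fun_sub hp
      simpa [hF1lin s] using this
    have := is_const_of_deriv_eq_zero (fun s => (hg0 s).differentiableAt)
      (fun s => (hg0 s).deriv) t 0
    simp at this
    linarith [this]
end

section
/- Let g be a lightline-complete connected pseudo-Riemannian metric of indefinite signature on a closed manifold M, on which any two points can be joined by a chain of lightlike geodesics. Then every solution λ of the Tanno–Obata equation ∇ₖ∇ⱼ∇ᵢλ + 2∇ₖλg_{ij} + ∇ᵢλg_{jk} + ∇ⱼλg_{ik} = 0 is constant. -/
open scoped BigOperators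

open scoped ContDiff

section AuxLemmas

lemma sum_prod4' {α : Type*} [Fintype α] (F : α×α×α×α → ℝ) :
    ∑ p, F p = ∑ a, ∑ b, ∑ c, ∑ d, F (a,b,c,d) := by
  rw [Fintype.sum_prod_type]
  refine Finset.sum_congr rfl fun a _ => ?_
  rw [Fintype.sum_prod_type]
  refine Finset.sum_congr rfl fun b _ => ?_
  rw [Fintype.sum_prod_type]

lemma sum4_perm' {α : Type*} [Fintype α] (φ : α → α → α → α → ℝ)
    (e : (α×α×α×α) ≃ (α×α×α×α)) :
    (∑ a, ∑ b, ∑ c, ∑ d, φ (e (a,b,c,d)).1 (e (a,b,c,d)).2.1 (e (a,b,c,d)).2.2.1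
        (e (a,b,c,d)).2.2.2)
      = ∑ a, ∑ b, ∑ c, ∑ d, φ a b c d := by
  rw [show (∑ a, ∑ b, ∑ c, ∑ d, φ (e (a,b,c,d)).1 (e (a,b,c,d)).2.1 (e (a,b,c,d)).2.2.1
        (e (a,b,c,d)).2.2.2)
      = ∑ p : α×α×α×α, φ (e p).1 (e p).2.1 (e p).2.2.1 (e p).2.2.2 from
      (sum_prod4' (fun p => φ (e p).1 (e p).2.1 (e p).2.2.1 (e p).2.2.2)).symm]
  exact (Fintype.sum_equiv e _ _ (fun x => rfl)).trans
    (sum_prod4' (fun p => φ p.1 p.2.1 p.2.2.1 p.2.2.2))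

lemma sum3_rot' {α : Type*} [Fintype α] (f : α → α → α → ℝ) :
    ∑ a, ∑ b, ∑ c, f a b c = ∑ c, ∑ a, ∑ b, f a b c := by
  have h1 : ∀ a, ∑ b, ∑ c, f a b c = ∑ c, ∑ b, f a b c := fun a => Finset.sum_comm
  simp_rw [h1]
  exact Finset.sum_comm

lemma alg2' {α : Type*} [Fintype α] (A : α → α → ℝ) (P : α → ℝ) (G : α → α → α → ℝ)
    (u : α → ℝ) :
    ∑ j, ∑ i, (A i j - ∑ m, G m j i * P m) * u j * u i
      = ∑ i, ((∑ j, A i j * u j) * u i + P i * (-∑ j, ∑ k, G i j k * u j * u k)) := by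
  have lhs : ∑ j, ∑ i, (A i j - ∑ m, G m j i * P m) * u j * u i
      = (∑ j, ∑ i, A i j * u j * u i) - ∑ j, ∑ i, ∑ m, G m j i * P m * u j * u i := by
    rw [← Finset.sum_sub_distrib]
    refine Finset.sum_congr rfl fun j _ => ?_
    rw [← Finset.sum_sub_distrib]
    refine Finset.sum_congr rfl fun i _ => ?_
    rw [sub_mul, sub_mul, Finset.sum_mul, Finset.sum_mul]
  have rhs : ∑ i, ((∑ j, A i j * u j) * u i + P i * (-∑ j, ∑ k, G i j k * u j * u k))
      = (∑ i, ∑ j, A i j * u j * u i) - ∑ i, ∑ j, ∑ k, G i j k * P i * u j * u k := by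
    rw [← Finset.sum_sub_distrib]
    refine Finset.sum_congr rfl fun i _ => ?_
    rw [Finset.sum_mul, mul_neg, Finset.mul_sum, sub_eq_add_neg]
    congr 1
    congr 1
    refine Finset.sum_congr rfl fun j _ => ?_
    rw [Finset.mul_sum]
    exact Finset.sum_congr rfl fun k _ => by ring
  rw [lhs, rhs]
  congr 1
  · exact Finset.sum_comm
  · rw [sum3_rot']

lemma alg3' {α : Type*} [Fintype α] (N : α → α → ℝ) (Np : α → α → α → ℝ)
    (G : α → α → α → ℝ) (u : α → ℝ) :
    (∑ j, ∑ i, (((∑ k, Np j i k * u k) * u j + N j i * (-∑ p, ∑ q, G j p q * u p * u q)) * u i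
        + N j i * u j * (-∑ p, ∑ q, G i p q * u p * u q)))
      = ∑ k, ∑ j, ∑ i,
          (Np j i k - ∑ m, G m k j * N m i - ∑ m, G m k i * N j m) * (u k * u j * u i) := by
  have hL : (∑ j, ∑ i, (((∑ k, Np j i k * u k) * u j
          + N j i * (-∑ p, ∑ q, G j p q * u p * u q)) * u i
        + N j i * u j * (-∑ p, ∑ q, G i p q * u p * u q)))
      = (∑ j, ∑ i, ∑ k, Np j i k * (u k * u j * u i))
        - (∑ j, ∑ i, ∑ p, ∑ q, G j p q * N j i * (u p * u q * u i))
        - (∑ j, ∑ i, ∑ p, ∑ q, G i p q * N j i * (u p * u j * u q)) := by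
    rw [← Finset.sum_sub_distrib, ← Finset.sum_sub_distrib]
    refine Finset.sum_congr rfl fun j _ => ?_
    rw [← Finset.sum_sub_distrib, ← Finset.sum_sub_distrib]
    refine Finset.sum_congr rfl fun i _ => ?_
    have step : (((∑ k, Np j i k * u k) * u j
          + N j i * (-∑ p, ∑ q, G j p q * u p * u q)) * u i
        + N j i * u j * (-∑ p, ∑ q, G i p q * u p * u q))
      = (∑ k, Np j i k * u k) * u j * u i
        - N j i * (∑ p, ∑ q, G j p q * u p * u q) * u i
        - N j i * u j * (∑ p, ∑ q, G i p q * u p * u q) := by ring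
    rw [step]
    congr 1
    · congr 1
      · rw [Finset.sum_mul, Finset.sum_mul]
        exact Finset.sum_congr rfl fun k _ => by ring
      · rw [Finset.mul_sum, Finset.sum_mul]
        refine Finset.sum_congr rfl fun p _ => ?_
        rw [Finset.mul_sum, Finset.sum_mul]
        exact Finset.sum_congr rfl fun q _ => by ring
    · rw [Finset.mul_sum]
      refine Finset.sum_congr rfl fun p _ => ?_
      rw [Finset.mul_sum]
      exact Finset.sum_congr rfl fun q _ => by ring
  have hR : (∑ k, ∑ j, ∑ i,
          (Np j i k - ∑ m, G m k j * N m i - ∑ m, G m k i * N j m) * (u k * u j * u i))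
      = (∑ k, ∑ j, ∑ i, Np j i k * (u k * u j * u i))
        - (∑ k, ∑ j, ∑ i, ∑ m, G m k j * N m i * (u k * u j * u i))
        - (∑ k, ∑ j, ∑ i, ∑ m, G m k i * N j m * (u k * u j * u i)) := by
    simp only [sub_mul, Finset.sum_mul, Finset.sum_sub_distrib]
  rw [hL, hR]
  congr 1
  · congr 1
    · exact sum3_rot' (fun j i k => Np j i k * (u k * u j * u i))
    · have h := sum4_perm' (fun k j i m => G m k j * N m i * (u k * u j * u i))
        ⟨fun p => (p.2.2.1, p.2.2.2, p.2.1, p.1),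
         fun q => (q.2.2.2, q.2.2.1, q.1, q.2.1), fun p => rfl, fun q => rfl⟩
      simp only [Equiv.coe_fn_mk] at h
      exact h
  · have h := sum4_perm' (fun k j i m => G m k i * N j m * (u k * u j * u i))
      ⟨fun p => (p.2.2.1, p.1, p.2.2.2, p.2.1),
       fun q => (q.2.1, q.2.2.2, q.1, q.2.2.1), fun p => rfl, fun q => rfl⟩
    simp only [Equiv.coe_fn_mk] at h
    exact h

lemma contract_zero' {α : Type*} [Fintype α] (T : α → α → α → ℝ) (P : α → ℝ)
    (gg : α → α → ℝ) (u : α → ℝ)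
    (htan : ∀ k j i, T k j i + 2 * P k * gg i j + P i * gg j k + P j * gg i k = 0)
    (hnul : ∑ i, ∑ j, gg i j * u i * u j = 0) :
    ∑ k, ∑ j, ∑ i, T k j i * (u k * u j * u i) = 0 := by
  have hnul2 : ∑ a, ∑ b, gg a b * (u b * u a) = 0 := by
    rw [← hnul]
    exact Finset.sum_congr rfl fun a _ => Finset.sum_congr rfl fun b _ => by ring
  have hT : ∀ k j i, T k j i = -(2 * P k * gg i j) - P i * gg j k - P j * gg i k :=
    fun k j i => by have := htan k j i; linarith
  have hW : ∑ j, ∑ i, gg i j * (u j * u i) = 0 := by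
    rw [Finset.sum_comm]; exact hnul2
  have hS : ∑ k, ∑ j, gg j k * (u k * u j) = 0 := by
    rw [Finset.sum_comm]; exact hnul2
  calc ∑ k, ∑ j, ∑ i, T k j i * (u k * u j * u i)
      = ∑ k, ((-(2 * P k * u k)) * (∑ j, ∑ i, gg i j * (u j * u i))
          + ((-(∑ j, gg j k * (u k * u j))) * (∑ i, P i * u i)
          + (-(∑ j, P j * u j)) * (∑ i, gg i k * (u k * u i)))) := by
        refine Finset.sum_congr rfl fun k _ => ?_
        simp only [neg_mul, Finset.sum_mul, Finset.mul_sum, ← Finset.sum_neg_distrib,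
          ← Finset.sum_add_distrib]
        refine Finset.sum_congr rfl fun j _ => Finset.sum_congr rfl fun i _ => ?_
        rw [hT k j i]; ring
    _ = 0 := by
        rw [Finset.sum_add_distrib, Finset.sum_add_distrib, hW]
        have h1 : ∑ k : α, -(2 * P k * u k) * 0 = 0 := by simp
        have h2 : ∑ k, (-(∑ j, gg j k * (u k * u j))) * (∑ i, P i * u i) = 0 := by
          rw [← Finset.sum_mul, Finset.sum_neg_distrib, hS]
          simp
        have h3 : ∑ k, (-(∑ j, P j * u j)) * (∑ i, gg i k * (u k * u i)) = 0 := by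
          rw [← Finset.mul_sum]
          have h4 : ∑ k, ∑ i, gg i k * (u k * u i) = 0 := by
            rw [Finset.sum_comm]; exact hnul2
          rw [h4, mul_zero]
        rw [h1, h2, h3]; ring

lemma bounded_quad_const {f : ℝ → ℝ} {b c C : ℝ}
    (hf : ∀ t : ℝ, f t = f 0 + b * t + c * t ^ 2)
    (hC : ∀ t, |f t| ≤ C) (t : ℝ) : f t = f 0 := by
  have hC0 : (0:ℝ) ≤ C := (abs_nonneg (f 0)).trans (hC 0)
  have key : ∀ s : ℝ, |c| * s ^ 2 ≤ C + |f 0| := by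
    intro s
    have e : c * s ^ 2 = (f s + f (-s) - 2 * f 0) / 2 := by
      rw [hf s, hf (-s)]; ring
    have h1 := abs_le.mp (hC s)
    have h2 := abs_le.mp (hC (-s))
    have h4 := le_abs_self (f 0)
    have h5 := neg_abs_le (f 0)
    have h3 : |c * s ^ 2| ≤ C + |f 0| := by
      rw [e]
      exact abs_le.mpr ⟨by linarith [h1.1, h2.1], by linarith [h1.2, h2.2]⟩
    calc |c| * s ^ 2 = |c * s ^ 2| := by rw [abs_mul, abs_pow, sq_abs]
      _ ≤ C + |f 0| := h3
  have hc : c = 0 := by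
    by_contra hc
    have hpos : 0 < |c| := abs_pos.mpr hc
    set s := Real.sqrt ((C + |f 0| + 1) / |c|) with hs
    have hs2 : s ^ 2 = (C + |f 0| + 1) / |c| := Real.sq_sqrt (by positivity)
    have hk := key s
    rw [hs2, mul_comm, div_mul_cancel₀ _ hpos.ne'] at hk
    linarith
  have keyb : ∀ s : ℝ, |b * s| ≤ C + |f 0| := by
    intro s
    have e : b * s = f s - f 0 := by rw [hf s, hc]; ring
    have h1 := abs_le.mp (hC s)
    have h4 := le_abs_self (f 0)
    have h5 := neg_abs_le (f 0)
    rw [e]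
    exact abs_le.mpr ⟨by linarith [h1.1], by linarith [h1.2]⟩
  have hb : b = 0 := by
    by_contra hb
    have hpos : 0 < |b| := abs_pos.mpr hb
    set s := (C + |f 0| + 1) / |b| with hs
    have hk := keyb s
    have hsnn : 0 ≤ s := div_nonneg (by positivity) hpos.le
    rw [abs_mul, abs_of_nonneg hsnn, mul_comm, hs, div_mul_cancel₀ _ hpos.ne'] at hk
    linarith
  rw [hf t, hb, hc]; ring

lemma fderiv_apply_pd {n : ℕ} (F : (Fin n → ℝ) → ℝ) (x v : Fin n → ℝ) :
    fderiv ℝ F x v = ∑ i, v i * pd F i x := by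
  have hv : v = ∑ i, v i • (Pi.single i (1:ℝ) : Fin n → ℝ) := by
    funext j
    simp [Finset.sum_apply, Pi.single_apply]
  conv_lhs => rw [hv]
  rw [map_sum]
  simp only [map_smul, smul_eq_mul, pd]

lemma contDiff_pd {n : ℕ} {F : (Fin n → ℝ) → ℝ} (hF : ContDiff ℝ ∞ F) (i : Fin n) :
    ContDiff ℝ ∞ (pd F i) := by
  have h1 : ContDiff ℝ ∞ (fderiv ℝ F) := hF.fderiv_right (by simp)
  exact h1.clm_apply contDiff_const

lemma hasDerivAt_comp_curve {n : ℕ} {F : (Fin n → ℝ) → ℝ} (hF : ContDiff ℝ ∞ F)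
    {γ : ℝ → Fin n → ℝ} (hγ : ContDiff ℝ ∞ γ) (t : ℝ) :
    HasDerivAt (fun s => F (γ s)) (∑ i, pd F i (γ t) * deriv (fun s => γ s i) t) t := by
  have h1 : HasDerivAt γ (deriv γ t) t :=
    ((hγ.differentiable (by simp)) t).hasDerivAt
  have h2 := ((hF.differentiable (by simp)) (γ t)).hasFDerivAt.comp_hasDerivAt t h1
  refine h2.congr_deriv (Eq.symm ?_)
  rw [fderiv_apply_pd]
  refine Finset.sum_congr rfl fun i _ => ?_
  have hc : deriv (fun s => γ s i) t = deriv γ t i := by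
    have h3 := ((ContinuousLinearMap.proj i :
      (Fin n → ℝ) →L[ℝ] ℝ).hasFDerivAt).comp_hasDerivAt t h1
    exact h3.deriv
  rw [hc, mul_comm]

noncomputable def cvel {n : ℕ} (γ : ℝ → Fin n → ℝ) (i : Fin n) : ℝ → ℝ :=
  deriv (fun s => γ s i)

lemma key_geodesic {n : ℕ}
    (Γ : (Fin n → ℝ) → Fin n → Fin n → Fin n → ℝ)
    (g : (Fin n → ℝ) → Fin n → Fin n → ℝ)
    (lam : (Fin n → ℝ) → ℝ)
    (hΓ : ∀ m j i, ContDiff ℝ ∞ (fun x => Γ x m j i))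
    (hlam : ContDiff ℝ ∞ lam)
    (C : ℝ) (hC : ∀ x, |lam x| ≤ C)
    (htanno : ∀ (x : Fin n → ℝ) (k j i : Fin n),
      nab3 Γ lam k j i x + 2 * pd lam k x * g x i j
        + pd lam i x * g x j k + pd lam j x * g x i k = 0)
    (γ : ℝ → Fin n → ℝ) (hγ : ContDiff ℝ ∞ γ)
    (hgeo : ∀ (t : ℝ) (i : Fin n), deriv (cvel γ i) t
        = -∑ j, ∑ k, Γ (γ t) i j k * cvel γ j t * cvel γ k t)
    (hnull : ∀ t : ℝ, ∑ i, ∑ j, g (γ t) i j * cvel γ i t * cvel γ j t = 0)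
    (a b : ℝ) : lam (γ a) = lam (γ b) := by
  have hγi : ∀ i, ContDiff ℝ ∞ (fun s => γ s i) := fun i => contDiff_pi.mp hγ i
  have hVc : ∀ i, ContDiff ℝ ∞ (cvel γ i) := fun i =>
    (contDiff_infty_iff_deriv.mp (hγi i)).2
  have hVd : ∀ (i) (t : ℝ), HasDerivAt (fun s => γ s i) (cvel γ i t) t := fun i t =>
    ((hγi i).differentiable (by simp) t).hasDerivAt
  have hWd : ∀ (i) (t : ℝ), HasDerivAt (cvel γ i)
      (-∑ j, ∑ k, Γ (γ t) i j k * cvel γ j t * cvel γ k t) t := by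
    intro i t
    have h := ((hVc i).differentiable (by simp) t).hasDerivAt
    rwa [hgeo t i] at h
  have hN2c : ∀ j i, ContDiff ℝ ∞ (nab2 Γ lam j i) := by
    intro j i
    exact (contDiff_pd (contDiff_pd hlam i) j).sub
      (ContDiff.sum fun m _ => (hΓ m j i).mul (contDiff_pd hlam m))
  set F1 : ℝ → ℝ := fun t => ∑ i, pd lam i (γ t) * cvel γ i t with hF1
  set F2 : ℝ → ℝ :=
    fun t => ∑ j, ∑ i, nab2 Γ lam j i (γ t) * cvel γ j t * cvel γ i t with hF2
  have hD1 : ∀ t : ℝ, HasDerivAt (fun s => lam (γ s)) (F1 t) t := fun t =>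
    hasDerivAt_comp_curve hlam hγ t
  have hD2 : ∀ t : ℝ, HasDerivAt F1 (F2 t) t := by
    intro t
    have h := HasDerivAt.fun_sum (u := Finset.univ) (x := t)
      (A := fun i s => pd lam i (γ s) * cvel γ i s)
      (A' := fun i => (∑ j, pd (pd lam i) j (γ t) * cvel γ j t) * cvel γ i t
        + pd lam i (γ t) * (-∑ j, ∑ k, Γ (γ t) i j k * cvel γ j t * cvel γ k t))
      (fun i _ => (hasDerivAt_comp_curve (contDiff_pd hlam i) hγ t).fun_mul (hWd i t))
    refine h.congr_deriv (Eq.symm ?_)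
    simp only [hF2, nab2]
    exact alg2' (fun i j => pd (pd lam i) j (γ t)) (fun m => pd lam m (γ t))
      (fun m j i => Γ (γ t) m j i) (fun i => cvel γ i t)
  have hD3 : ∀ t : ℝ, HasDerivAt F2 0 t := by
    intro t
    have h := HasDerivAt.fun_sum (u := Finset.univ) (x := t)
      (A := fun j s => ∑ i, nab2 Γ lam j i (γ s) * cvel γ j s * cvel γ i s)
      (A' := fun j => ∑ i,
        (((∑ k, pd (nab2 Γ lam j i) k (γ t) * cvel γ k t) * cvel γ j t
            + nab2 Γ lam j i (γ t)
              * (-∑ p, ∑ q, Γ (γ t) j p q * cvel γ p t * cvel γ q t))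
          * cvel γ i t
         + nab2 Γ lam j i (γ t) * cvel γ j t
            * (-∑ p, ∑ q, Γ (γ t) i p q * cvel γ p t * cvel γ q t)))
      (fun j _ => HasDerivAt.fun_sum (fun i _ =>
        (((hasDerivAt_comp_curve (hN2c j i) hγ t).fun_mul (hWd j t)).fun_mul (hWd i t))))
    refine h.congr_deriv (Eq.symm ?_)
    have h1 := alg3' (fun j i => nab2 Γ lam j i (γ t))
      (fun j i k => pd (nab2 Γ lam j i) k (γ t))
      (fun a b c => Γ (γ t) a b c) (fun i => cvel γ i t)
    have h2 := contract_zero' (fun k j i => nab3 Γ lam k j i (γ t))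
      (fun k => pd lam k (γ t)) (fun a b => g (γ t) a b) (fun i => cvel γ i t)
      (fun k j i => htanno (γ t) k j i) (hnull t)
    simp only [nab3] at h2
    rw [← h1] at h2
    exact h2.symm
  have hF2const : ∀ t : ℝ, F2 t = F2 0 := fun t =>
    is_const_of_deriv_eq_zero (fun s => (hD3 s).differentiableAt)
      (fun s => (hD3 s).deriv) t 0
  have hlin : ∀ t : ℝ, F1 t = F1 0 + F2 0 * t := by
    have hD : ∀ t : ℝ, HasDerivAt (fun s => F1 s - F2 0 * s) 0 t := by
      intro t
      have h := (hD2 t).sub ((hasDerivAt_id t).const_mul (F2 0))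
      have hv : F2 t - F2 0 * 1 = 0 := by rw [hF2const t]; ring
      rwa [hv] at h
    intro t
    have h := is_const_of_deriv_eq_zero (fun s => (hD s).differentiableAt)
      (fun s => (hD s).deriv) t 0
    simp only [mul_zero, sub_zero] at h
    linarith
  have hquad : ∀ t : ℝ, lam (γ t) = lam (γ 0) + F1 0 * t + F2 0 / 2 * t ^ 2 := by
    have hD : ∀ t : ℝ,
        HasDerivAt (fun s => lam (γ s) - F1 0 * s - F2 0 / 2 * s ^ 2) 0 t := by
      intro t
      have h := ((hD1 t).sub ((hasDerivAt_id t).const_mul (F1 0))).sub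
        ((hasDerivAt_pow 2 t).const_mul (F2 0 / 2))
      have hv : F1 t - F1 0 * 1 - F2 0 / 2 * ((2:ℕ) * t ^ (2 - 1)) = 0 := by
        rw [hlin t]; push_cast; ring
      rwa [hv] at h
    intro t
    have h := is_const_of_deriv_eq_zero (fun s => (hD s).differentiableAt)
      (fun s => (hD s).deriv) t 0
    have h0 : (0:ℝ) ^ 2 = 0 := by norm_num
    rw [h0] at h
    simp only [mul_zero, sub_zero] at h
    linarith
  have hf : ∀ t : ℝ, (fun t => lam (γ t)) t
      = (fun t => lam (γ t)) 0 + F1 0 * t + F2 0 / 2 * t ^ 2 := hquad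
  have hcst := bounded_quad_const (f := fun t => lam (γ t)) hf (fun t => hC (γ t))
  exact (hcst a).trans (hcst b).symm

end AuxLemmas

/-- Theorem 1: on a closed connected manifold (modelled as the torus `ℝⁿ/ℤⁿ`,
i.e. all data are `ℤⁿ`-periodic) with a pseudo-Riemannian metric of indefinite
signature all of whose lightlike geodesics are defined on all of `ℝ`, and such
that any two points can be joined by a chain of lightlike geodesics, every
solution `λ` of the Tanno–Obata equation is constant. -/
theorem stmt_14 (n : ℕ)
    (g ginv : (Fin n → ℝ) → Fin n → Fin n → ℝ)
    (lam : (Fin n → ℝ) → ℝ)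
    (hg : ContDiff ℝ (⊤ : ℕ∞) g) (hginv : ContDiff ℝ (⊤ : ℕ∞) ginv) (hlam : ContDiff ℝ (⊤ : ℕ∞) lam)
    -- periodicity: all data live on the closed manifold ℝⁿ/ℤⁿ
    (hgper : ∀ (x : Fin n → ℝ) (m : Fin n → ℤ), g (x + fun i => (m i : ℝ)) = g x)
    (hginvper : ∀ (x : Fin n → ℝ) (m : Fin n → ℤ), ginv (x + fun i => (m i : ℝ)) = ginv x)
    (hlamper : ∀ (x : Fin n → ℝ) (m : Fin n → ℤ), lam (x + fun i => (m i : ℝ)) = lam x)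
    (hinverse : ∀ (x : Fin n → ℝ) (i k : Fin n),
      ∑ j, ginv x i j * g x j k = if i = k then (1 : ℝ) else 0)
    (hsym : ∀ x i j, g x i j = g x j i)
    -- the metric has indefinite signature
    (hindef : ∀ x : Fin n → ℝ,
      (∃ v : Fin n → ℝ, 0 < ∑ i, ∑ j, g x i j * v i * v j) ∧
      (∃ w : Fin n → ℝ, ∑ i, ∑ j, g x i j * w i * w j < 0))
    -- the Tanno–Obata equation, Γ being the Levi-Civita connection of g
    (htanno : ∀ (x : Fin n → ℝ) (k j i : Fin n),
      nab3 (christoffel g ginv) lam k j i x + 2 * pd lam k x * g x i j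
        + pd lam i x * g x j k + pd lam j x * g x i k = 0)
    -- lightline-completeness and connectedness by lightlike geodesics: any two
    -- points are joined by a chain of lightlike geodesics defined on all of ℝ
    (hchain : ∀ x y : Fin n → ℝ, Relation.ReflTransGen
      (fun a b => ∃ γ : ℝ → Fin n → ℝ, ContDiff ℝ (⊤ : ℕ∞) γ ∧
        (∀ (t : ℝ) (i : Fin n), deriv (deriv fun s => γ s i) t
          + ∑ j, ∑ k, christoffel g ginv (γ t) i j k
              * deriv (fun s => γ s j) t * deriv (fun s => γ s k) t = 0) ∧
        (∀ t : ℝ, ∑ i, ∑ j, g (γ t) i j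
            * deriv (fun s => γ s i) t * deriv (fun s => γ s j) t = 0) ∧
        ∃ s t : ℝ, γ s = a ∧ γ t = b) x y) :
    ∀ x y : Fin n → ℝ, lam x = lam y := by
  have hg' : ContDiff ℝ ∞ g := hg.of_le (by simp)
  have hginv' : ContDiff ℝ ∞ ginv := hginv.of_le (by simp)
  have hlam' : ContDiff ℝ ∞ lam := hlam.of_le (by simp)
  have hgc : ∀ a b, ContDiff ℝ ∞ (fun x => g x a b) := fun a b =>
    contDiff_pi.mp (contDiff_pi.mp hg' a) b
  have hginvc : ∀ a b, ContDiff ℝ ∞ (fun x => ginv x a b) := fun a b =>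
    contDiff_pi.mp (contDiff_pi.mp hginv' a) b
  have hGam : ∀ m j i, ContDiff ℝ ∞ (fun x => christoffel g ginv x m j i) := by
    intro m j i
    simp only [christoffel]
    exact contDiff_const.mul (ContDiff.sum fun h _ =>
      (hginvc m h).mul (((contDiff_pd (hgc j h) i).add
        (contDiff_pd (hgc h i) j)).sub (contDiff_pd (hgc j i) h)))
  obtain ⟨C, hC⟩ : ∃ C : ℝ, ∀ x, |lam x| ≤ C := by
    obtain ⟨C, hC⟩ := (isCompact_Icc (a := (0 : Fin n → ℝ))
      (b := 1)).exists_bound_of_continuousOn hlam'.continuous.continuousOn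
    refine ⟨C, fun x => ?_⟩
    have hmem : (fun i => x i - ⌊x i⌋) ∈ Set.Icc (0 : Fin n → ℝ) 1 := by
      refine Set.mem_Icc.mpr ⟨Pi.le_def.mpr fun i => ?_, Pi.le_def.mpr fun i => ?_⟩
      · simp only [Pi.zero_apply]
        have := Int.floor_le (x i)
        linarith
      · simp only [Pi.one_apply]
        have := Int.lt_floor_add_one (x i)
        linarith
    have he := hlamper x (fun i => -⌊x i⌋)
    have hx2 : (x + fun i => ((-⌊x i⌋ : ℤ) : ℝ)) = fun i => x i - ⌊x i⌋ := by
      funext i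
      simp only [Pi.add_apply]
      push_cast
      ring
    rw [hx2] at he
    rw [← he]
    simpa [Real.norm_eq_abs] using hC _ hmem
  intro x y
  induction hchain x y with
  | refl => rfl
  | tail hxb hbc ih =>
      obtain ⟨γ, h1, h2, h3, s0, t0, hs, ht⟩ := hbc
      have hγ' : ContDiff ℝ ∞ γ := h1.of_le (by simp)
      have hgeo : ∀ (t : ℝ) (i : Fin n), deriv (cvel γ i) t
          = -∑ j, ∑ k, christoffel g ginv (γ t) i j k * cvel γ j t * cvel γ k t := by
        intro t i
        have h := h2 t i
        simp only [cvel]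
        linarith
      have hnull : ∀ t : ℝ,
          ∑ i, ∑ j, g (γ t) i j * cvel γ i t * cvel γ j t = 0 := by
        intro t
        simp only [cvel]
        exact h3 t
      have hkey := key_geodesic (christoffel g ginv) g lam hGam hlam' C hC htanno
        γ hγ' hgeo hnull s0 t0
      rw [hs, ht] at hkey
      exact ih.trans hkey
end
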